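/- Let S² = {x ∈ ℝ³ : ‖x‖ = 1}, μ⁺, μ⁻ > 0, and let u⁺, u⁻ : ℝ³ → ℝ³ be C² on open sets U⁺, U⁻ containing S², p⁺, p⁻ C¹ on U⁺, U⁻, g⁺, g⁻ continuous, and f : ℝ³ → ℝ³ be C¹ on a neighborhood of S². Assume: (i) ∇p^± = μ^±Δu^± + g^± on U^±; (ii) trace(Du^±) = 0 on U^±; (iii) u⁺ = u⁻ on S²; (iv) ⟪Du⁻(x)x, x⟫ = 0 for all x ∈ S² (surface incompressibility); (v) for all x ∈ S², (−p⁺(x)·x + μ⁺(Du⁺(x) + Du⁺(x)*)x) − (−p⁻(x)·x + μ⁻(Du⁻(x) + Du⁻(x)*)x) = f(x). Then for every x ∈ S² and every pair t, b of orthonormal vectors with ⟪t,x⟫ = ⟪b,x⟫ = 0: ⟪∇p⁺(x) − ∇p⁻(x), x⟫ = 2(μ⁺ − μ⁻)(⟪Δ_S u⁻(x), x⟫ + ⟪Du⁻(x)t, t⟫ + ⟪Du⁻(x)b, b⟫) − (⟪Df(x)t, t⟫ + ⟪Df(x)b, b⟫) + 2⟪f(x), x⟫ + ⟪g⁺(x)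 − g⁻(x), x⟫, where Δ_S u⁻(x) := D²u⁻(x)(t,t) + D²u⁻(x)(b,b) − 2·Du⁻(x)x. -/

import Mathlib

open RealInnerProductSpace

noncomputable section

abbrev E3 := EuclideanSpace ℝ (Fin 3)

/-- The unit sphere in ℝ³. -/
def unitSphere : Set E3 := {x : E3 | ‖x‖ = 1}

/-- The second Fréchet derivative of a map `u : ℝ³ → ℝ³`, applied to two vectors. -/
def D2 (u : E3 → E3) (x v w : E3) : E3 := fderiv ℝ (fderiv ℝ u) x v w

/-- The componentwise vector Laplacian of `u : ℝ³ → ℝ³` at `x`. -/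
def vecLap (u : E3 → E3) (x : E3) : E3 :=
  ∑ i : Fin 3, fderiv ℝ (fderiv ℝ u) x (EuclideanSpace.single i 1) (EuclideanSpace.single i 1)

/-- A great circle through `x` in direction `t`. -/
def gc (x t : E3) (s : ℝ) : E3 := Real.cos s • x + Real.sin s • t

lemma gc_zero (x t : E3) : gc x t 0 = x := by simp [gc]

lemma hasDerivAt_gc (x t : E3) (s : ℝ) :
    HasDerivAt (gc x t) (-Real.sin s • x + Real.cos s • t) s :=
  ((Real.hasDerivAt_cos s).smul_const x).add ((Real.hasDerivAt_sin s).smul_const t)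

lemma hasDerivAt_gc' (x t : E3) :
    HasDerivAt (fun s => -Real.sin s • x + Real.cos s • t) (-x) 0 := by
  have h := (((Real.hasDerivAt_sin 0).neg).smul_const x).add
    (((Real.hasDerivAt_cos 0).smul_const t))
  simpa [Pi.add_def] using h

lemma gc_mem {x t : E3} (hx : ‖x‖ = 1) (ht : ‖t‖ = 1) (htx : ⟪t, x⟫ = 0) (s : ℝ) :
    gc x t s ∈ unitSphere := by
  have hxx : ⟪x, x⟫ = (1:ℝ) := by
    rw [real_inner_self_eq_norm_mul_norm, hx]; norm_num
  have htt : ⟪t, t⟫ = (1:ℝ) := by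
    rw [real_inner_self_eq_norm_mul_norm, ht]; norm_num
  have hxt : ⟪x, t⟫ = (0:ℝ) := by rw [real_inner_comm]; exact htx
  have h2 : ‖gc x t s‖ ^ 2 = 1 := by
    rw [← real_inner_self_eq_norm_sq, gc]
    simp only [inner_add_left, inner_add_right, real_inner_smul_left, real_inner_smul_right,
      hxx, htt, htx, hxt]
    nlinarith [Real.sin_sq_add_cos_sq s]
  have h3 : (‖gc x t s‖ - 1) * (‖gc x t s‖ + 1) = 0 := by linear_combination h2
  rcases mul_eq_zero.mp h3 with h | h
  · show ‖gc x t s‖ = 1; linarith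
  · have := norm_nonneg (gc x t s); linarith

lemma hasDerivAt_comp_gc {F : Type*} [NormedAddCommGroup F] [NormedSpace ℝ F]
    (x t : E3) {φ : E3 → F} (hφ : DifferentiableAt ℝ φ x) :
    HasDerivAt (fun s => φ (gc x t s)) (fderiv ℝ φ x t) 0 := by
  have h0 : gc x t 0 = x := gc_zero x t
  have h : HasFDerivAt φ (fderiv ℝ φ x) (gc x t 0) := by rw [h0]; exact hφ.hasFDerivAt
  have := h.comp_hasDerivAt 0 (hasDerivAt_gc x t 0)
  simpa [Function.comp_def] using this

lemma deriv_comp_gc_eq {x t : E3} (hx : ‖x‖ = 1) (ht : ‖t‖ = 1) (htx : ⟪t, x⟫ = 0)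
    {u : E3 → E3} (hu : ∀ y ∈ unitSphere, DifferentiableAt ℝ u y) :
    deriv (fun s => u (gc x t s))
      = fun s => fderiv ℝ u (gc x t s) (-Real.sin s • x + Real.cos s • t) := by
  funext s
  exact ((hu _ (gc_mem hx ht htx s)).hasFDerivAt.comp_hasDerivAt s (hasDerivAt_gc x t s)).deriv

lemma hasDerivAt_deriv_comp_gc {x t : E3} (hx : ‖x‖ = 1) (ht : ‖t‖ = 1) (htx : ⟪t, x⟫ = 0)
    {u : E3 → E3} (hu : ∀ y ∈ unitSphere, DifferentiableAt ℝ u y)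
    (hu2 : DifferentiableAt ℝ (fderiv ℝ u) x) :
    HasDerivAt (deriv (fun s => u (gc x t s)))
      (fderiv ℝ (fderiv ℝ u) x t t - fderiv ℝ u x x) 0 := by
  rw [deriv_comp_gc_eq hx ht htx hu]
  have hc : HasDerivAt (fun s => fderiv ℝ u (gc x t s)) (fderiv ℝ (fderiv ℝ u) x t) 0 :=
    hasDerivAt_comp_gc x t hu2
  have hv : HasDerivAt (fun s => -Real.sin s • x + Real.cos s • t) (-x) 0 := hasDerivAt_gc' x t
  have h := hc.clm_apply hv
  simp only [gc_zero, Real.sin_zero, Real.cos_zero, neg_zero, zero_smul, one_smul,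
    zero_add, map_neg] at h
  simpa [sub_eq_add_neg] using h

/-- jump of tangential-tangential second derivative -/
lemma secondDeriv_jump {x t : E3} (hx : ‖x‖ = 1) (ht : ‖t‖ = 1) (htx : ⟪t, x⟫ = 0)
    {up um : E3 → E3} (hcont : ∀ y ∈ unitSphere, up y = um y)
    (hup : ∀ y ∈ unitSphere, DifferentiableAt ℝ up y)
    (hum : ∀ y ∈ unitSphere, DifferentiableAt ℝ um y)
    (hup2 : DifferentiableAt ℝ (fderiv ℝ up) x)
    (hum2 : DifferentiableAt ℝ (fderiv ℝ um) x) :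
    fderiv ℝ (fderiv ℝ up) x t t - fderiv ℝ up x x
      = fderiv ℝ (fderiv ℝ um) x t t - fderiv ℝ um x x := by
  have hfun : (fun s => up (gc x t s)) = (fun s => um (gc x t s)) :=
    funext fun s => hcont _ (gc_mem hx ht htx s)
  have h1 := hasDerivAt_deriv_comp_gc hx ht htx hup hup2
  rw [hfun] at h1
  exact h1.unique (hasDerivAt_deriv_comp_gc hx ht htx hum hum2)

/-- equality of tangential first derivatives of functions agreeing on the sphere -/
lemma fderiv_tang_eq {F : Type*} [NormedAddCommGroup F] [NormedSpace ℝ F]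
    {x t : E3} (hx : ‖x‖ = 1) (ht : ‖t‖ = 1) (htx : ⟪t, x⟫ = 0)
    {φ ψ : E3 → F} (h : ∀ y ∈ unitSphere, φ y = ψ y)
    (hφ : DifferentiableAt ℝ φ x) (hψ : DifferentiableAt ℝ ψ x) :
    fderiv ℝ φ x t = fderiv ℝ ψ x t := by
  have hfun : (fun s => φ (gc x t s)) = (fun s => ψ (gc x t s)) :=
    funext fun s => h _ (gc_mem hx ht htx s)
  have h1 := hasDerivAt_comp_gc x t hφ
  rw [hfun] at h1
  exact h1.unique (hasDerivAt_comp_gc x t hψ)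

lemma trace_eq_sum_frame (B : OrthonormalBasis (Fin 3) ℝ E3) (L : E3 →ₗ[ℝ] E3) :
    LinearMap.trace ℝ E3 L = ∑ i, ⟪B i, L (B i)⟫ := by
  rw [LinearMap.trace_eq_matrix_trace ℝ B.toBasis L, Matrix.trace]
  congr 1
  funext i
  simp [Matrix.diag, LinearMap.toMatrix_apply, OrthonormalBasis.coe_toBasis,
    OrthonormalBasis.coe_toBasis_repr_apply, OrthonormalBasis.repr_apply_apply]

/-- orthonormal basis from a frame t, b, x -/
def frameON {t b x : E3} (h : Orthonormal ℝ ![t, b, x]) : OrthonormalBasis (Fin 3) ℝ E3 :=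
  (basisOfOrthonormalOfCardEqFinrank h (by simp)).toOrthonormalBasis
    (by rw [coe_basisOfOrthonormalOfCardEqFinrank]; exact h)

lemma frameON_coe {t b x : E3} (h : Orthonormal ℝ ![t, b, x]) :
    ⇑(frameON h) = ![t, b, x] := by
  rw [frameON, Module.Basis.coe_toOrthonormalBasis, coe_basisOfOrthonormalOfCardEqFinrank]

lemma frame_orthonormal {t b x : E3} (hx : ‖x‖ = 1) (ht : ‖t‖ = 1) (hb : ‖b‖ = 1)
    (htb : ⟪t, b⟫ = 0) (htx : ⟪t, x⟫ = 0) (hbx : ⟪b, x⟫ = 0) :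
    Orthonormal ℝ ![t, b, x] := by
  have hxx : ⟪x, x⟫ = (1:ℝ) := by rw [real_inner_self_eq_norm_mul_norm, hx]; norm_num
  have htt : ⟪t, t⟫ = (1:ℝ) := by rw [real_inner_self_eq_norm_mul_norm, ht]; norm_num
  have hbb : ⟪b, b⟫ = (1:ℝ) := by rw [real_inner_self_eq_norm_mul_norm, hb]; norm_num
  have hbt : ⟪b, t⟫ = (0:ℝ) := by rw [real_inner_comm]; exact htb
  have hxt : ⟪x, t⟫ = (0:ℝ) := by rw [real_inner_comm]; exact htx
  have hxb : ⟪x, b⟫ = (0:ℝ) := by rw [real_inner_comm]; exact hbx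
  rw [orthonormal_iff_ite]
  intro i j
  fin_cases i <;> fin_cases j <;>
    simp [hxx, htt, hbb, htb, htx, hbx, hbt, hxt, hxb, hx, ht, hb]

lemma trace_frame {t b x : E3} (h : Orthonormal ℝ ![t, b, x]) (L : E3 →ₗ[ℝ] E3) :
    LinearMap.trace ℝ E3 L = ⟪t, L t⟫ + ⟪b, L b⟫ + ⟪x, L x⟫ := by
  rw [trace_eq_sum_frame (frameON h), Fin.sum_univ_three]
  rw [frameON_coe h]
  simp [add_assoc]

/-- v ↦ (A v)* x as a linear map -/
def phiMap (A : E3 →L[ℝ] E3 →L[ℝ] E3) (x : E3) : E3 →ₗ[ℝ] E3 where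
  toFun v := ContinuousLinearMap.adjoint (A v) x
  map_add' v w := by
    show ContinuousLinearMap.adjoint (A (v + w)) x = _
    rw [map_add, map_add, ContinuousLinearMap.add_apply]
  map_smul' c v := by
    show ContinuousLinearMap.adjoint (A (c • v)) x = _
    rw [map_smul]
    simp [map_smulₛₗ, starRingEnd_apply, star_trivial]

lemma inner_phiMap (A : E3 →L[ℝ] E3 →L[ℝ] E3) (x v w : E3) :
    ⟪phiMap A x v, w⟫ = ⟪x, A v w⟫ := by
  simp [phiMap, ContinuousLinearMap.adjoint_inner_left]

lemma vecLap_inner_frame {t b x : E3} (h : Orthonormal ℝ ![t, b, x]) (u : E3 → E3) :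
    ⟪vecLap u x, x⟫
      = ⟪x, fderiv ℝ (fderiv ℝ u) x t t⟫ + ⟪x, fderiv ℝ (fderiv ℝ u) x b b⟫
        + ⟪x, fderiv ℝ (fderiv ℝ u) x x x⟫ := by
  set A := fderiv ℝ (fderiv ℝ u) x with hA
  have h1 : ⟪vecLap u x, x⟫ = LinearMap.trace ℝ E3 (phiMap A x) := by
    rw [trace_eq_sum_frame (EuclideanSpace.basisFun (Fin 3) ℝ) (phiMap A x), vecLap, sum_inner]
    congr 1
    funext i
    simp only [EuclideanSpace.basisFun_apply]
    rw [real_inner_comm (phiMap A x (EuclideanSpace.single i 1)), inner_phiMap,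
      real_inner_comm]
  have h2 : LinearMap.trace ℝ E3 (phiMap A x)
      = ⟪x, A t t⟫ + ⟪x, A b b⟫ + ⟪x, A x x⟫ := by
    rw [trace_eq_sum_frame (frameON h) (phiMap A x), Fin.sum_univ_three, frameON_coe h]
    simp only [Matrix.cons_val_zero, Matrix.cons_val_one, Matrix.head_cons,
      Matrix.cons_val_two, Matrix.tail_cons]
    rw [real_inner_comm (phiMap A x t) t, inner_phiMap,
        real_inner_comm (phiMap A x b) b, inner_phiMap,
        real_inner_comm (phiMap A x x) x, inner_phiMap]
  rw [h1, h2]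

/-- derivative of the divergence along direction x vanishes -/
lemma divderiv_frame {t b x : E3} (h : Orthonormal ℝ ![t, b, x])
    {u : E3 → E3} {U : Set E3} (hUo : IsOpen U) (hxU : x ∈ U)
    (hu2 : DifferentiableAt ℝ (fderiv ℝ u) x)
    (hdiv : ∀ y ∈ U, LinearMap.trace ℝ E3 (fderiv ℝ u y : E3 →ₗ[ℝ] E3) = 0) :
    ⟪t, fderiv ℝ (fderiv ℝ u) x x t⟫ + ⟪b, fderiv ℝ (fderiv ℝ u) x x b⟫
      + ⟪x, fderiv ℝ (fderiv ℝ u) x x x⟫ = 0 := by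
  set A := fderiv ℝ (fderiv ℝ u) x with hA
  set l : ℝ → E3 := fun s => x + s • x with hl
  have hl0 : l 0 = x := by simp [hl]
  have hld : HasDerivAt l x 0 := by
    have := (hasDerivAt_id (0:ℝ)).smul_const x
    simpa [hl] using (this.const_add x)
  have hlc : Continuous l := by
    apply continuous_const.add (continuous_id.smul continuous_const)
  have hDu : HasDerivAt (fun s => fderiv ℝ u (l s)) (A x) 0 := by
    have hf : HasFDerivAt (fderiv ℝ u) A (l 0) := by rw [hl0]; exact hu2.hasFDerivAt
    exact hf.comp_hasDerivAt 0 hld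
  have hterm : ∀ τ : E3, HasDerivAt (fun s => ⟪τ, fderiv ℝ u (l s) τ⟫) ⟪τ, A x τ⟫ 0 := by
    intro τ
    have h1 : HasDerivAt (fun s => fderiv ℝ u (l s) τ) (A x τ) 0 := by
      have := hDu.clm_apply (hasDerivAt_const 0 τ)
      simpa using this
    have := (hasDerivAt_const (0:ℝ) τ).inner ℝ h1
    simpa [hl0] using this
  have hq : HasDerivAt
      (fun s => ⟪t, fderiv ℝ u (l s) t⟫ + ⟪b, fderiv ℝ u (l s) b⟫ + ⟪x, fderiv ℝ u (l s) x⟫)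
      (⟪t, A x t⟫ + ⟪b, A x b⟫ + ⟪x, A x x⟫) 0 := ((hterm t).add (hterm b)).add (hterm x)
  have hev : (fun s => ⟪t, fderiv ℝ u (l s) t⟫ + ⟪b, fderiv ℝ u (l s) b⟫
      + ⟪x, fderiv ℝ u (l s) x⟫) =ᶠ[nhds (0:ℝ)] (fun _ => (0:ℝ)) := by
    have hmem : ∀ᶠ s in nhds (0:ℝ), l s ∈ U := by
      have : Filter.Tendsto l (nhds 0) (nhds x) := by
        rw [← hl0]; exact hlc.continuousAt
      exact this.eventually (hUo.eventually_mem hxU)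
    exact hmem.mono fun s hs => by
      have := hdiv (l s) hs
      rw [trace_frame h] at this
      simpa using this
  have h0 : HasDerivAt (fun _ : ℝ => (0:ℝ)) (⟪t, A x t⟫ + ⟪b, A x b⟫ + ⟪x, A x x⟫) 0 :=
    hq.congr_of_eventuallyEq hev.symm
  have := h0.unique (hasDerivAt_const 0 0)
  linarith [this]

/-- scalar form of the stress jump condition, paired with a fixed vector τ -/
lemma stress_inner {μp μm : ℝ} {up um : E3 → E3} {pp pm : E3 → ℝ} {f : E3 → E3}
    (hstress : ∀ x ∈ unitSphere,
      ((-(pp x)) • x + μp • ((fderiv ℝ up x + ContinuousLinearMap.adjoint (fderiv ℝ up x)) x))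
        - ((-(pm x)) • x + μm • ((fderiv ℝ um x + ContinuousLinearMap.adjoint (fderiv ℝ um x)) x))
        = f x) (y : E3) (hy : y ∈ unitSphere) (τ : E3) :
    ⟪f y, τ⟫ = (-(pp y) * ⟪y, τ⟫ + μp * (⟪fderiv ℝ up y y, τ⟫ + ⟪y, fderiv ℝ up y τ⟫))
      - (-(pm y) * ⟪y, τ⟫ + μm * (⟪fderiv ℝ um y y, τ⟫ + ⟪y, fderiv ℝ um y τ⟫)) := by
  have h := congrArg (fun v : E3 => ⟪v, τ⟫) (hstress y hy)
  simp only [inner_sub_left, inner_add_left, real_inner_smul_left,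
    ContinuousLinearMap.add_apply, ContinuousLinearMap.adjoint_inner_left] at h
  exact h.symm

set_option maxHeartbeats 1000000 in
/-- tangential derivative of the stress jump condition -/
lemma stress_tang {μp μm : ℝ} {up um : E3 → E3} {pp pm : E3 → ℝ} {f : E3 → E3}
    (hstress : ∀ x ∈ unitSphere,
      ((-(pp x)) • x + μp • ((fderiv ℝ up x + ContinuousLinearMap.adjoint (fderiv ℝ up x)) x))
        - ((-(pm x)) • x + μm • ((fderiv ℝ um x + ContinuousLinearMap.adjoint (fderiv ℝ um x)) x))
        = f x)
    {x τ : E3} (hx : ‖x‖ = 1) (hτ : ‖τ‖ = 1) (hτx : ⟪τ, x⟫ = 0)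
    (hppd : DifferentiableAt ℝ pp x) (hpmd : DifferentiableAt ℝ pm x)
    (hfd : DifferentiableAt ℝ f x)
    (hup2 : DifferentiableAt ℝ (fderiv ℝ up) x)
    (hum2 : DifferentiableAt ℝ (fderiv ℝ um) x) :
    ⟪fderiv ℝ f x τ, τ⟫ = -(pp x) + pm x
      + μp * (⟪fderiv ℝ (fderiv ℝ up) x τ x, τ⟫ + ⟪fderiv ℝ up x τ, τ⟫
          + ⟪τ, fderiv ℝ up x τ⟫ + ⟪x, fderiv ℝ (fderiv ℝ up) x τ τ⟫)
      - μm * (⟪fderiv ℝ (fderiv ℝ um) x τ x, τ⟫ + ⟪fderiv ℝ um x τ, τ⟫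
          + ⟪τ, fderiv ℝ um x τ⟫ + ⟪x, fderiv ℝ (fderiv ℝ um) x τ τ⟫) := by
  set γ := gc x τ with hγdef
  have hτt : ⟪x, τ⟫ = (0:ℝ) := by rw [real_inner_comm]; exact hτx
  have hττ : ⟪τ, τ⟫ = (1:ℝ) := by rw [real_inner_self_eq_norm_mul_norm, hτ]; norm_num
  -- the curve and its derivative
  have hγ : HasDerivAt γ τ 0 := by simpa using hasDerivAt_gc x τ 0
  have hγ0 : γ 0 = x := gc_zero x τ
  -- LHS derivative
  have hL : HasDerivAt (fun s => ⟪f (γ s), τ⟫) ⟪fderiv ℝ f x τ, τ⟫ 0 := by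
    have := (hasDerivAt_comp_gc x τ hfd).inner ℝ (hasDerivAt_const (0:ℝ) τ)
    simpa using this
  -- RHS pieces, for a generic velocity field u
  have piece : ∀ (u : E3 → E3), DifferentiableAt ℝ (fderiv ℝ u) x →
      HasDerivAt (fun s => ⟪fderiv ℝ u (γ s) (γ s), τ⟫ + ⟪γ s, fderiv ℝ u (γ s) τ⟫)
        (⟪fderiv ℝ (fderiv ℝ u) x τ x, τ⟫ + ⟪fderiv ℝ u x τ, τ⟫
          + ⟪τ, fderiv ℝ u x τ⟫ + ⟪x, fderiv ℝ (fderiv ℝ u) x τ τ⟫) 0 := by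
    intro u hu2
    have hDu : HasDerivAt (fun s => fderiv ℝ u (γ s)) (fderiv ℝ (fderiv ℝ u) x τ) 0 :=
      hasDerivAt_comp_gc x τ hu2
    have h1 : HasDerivAt (fun s => fderiv ℝ u (γ s) (γ s))
        (fderiv ℝ (fderiv ℝ u) x τ x + fderiv ℝ u x τ) 0 := by
      have := hDu.clm_apply hγ
      simpa [hγ0] using this
    have h1' : HasDerivAt (fun s => ⟪fderiv ℝ u (γ s) (γ s), τ⟫)
        (⟪fderiv ℝ (fderiv ℝ u) x τ x, τ⟫ + ⟪fderiv ℝ u x τ, τ⟫) 0 := by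
      have := h1.inner ℝ (hasDerivAt_const (0:ℝ) τ)
      simpa [inner_add_left] using this
    have h2 : HasDerivAt (fun s => fderiv ℝ u (γ s) τ)
        (fderiv ℝ (fderiv ℝ u) x τ τ) 0 := by
      have := hDu.clm_apply (hasDerivAt_const 0 τ)
      simpa using this
    have h2' : HasDerivAt (fun s => ⟪γ s, fderiv ℝ u (γ s) τ⟫)
        (⟪τ, fderiv ℝ u x τ⟫ + ⟪x, fderiv ℝ (fderiv ℝ u) x τ τ⟫) 0 := by
      have := hγ.inner ℝ h2
      simpa [hγ0, add_comm] using this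
    have := h1'.add h2'
    simp only [Pi.add_def] at this
    rw [← add_assoc] at this
    exact this
  -- pressure pieces
  have hpτ : HasDerivAt (fun s => ⟪γ s, τ⟫) 1 0 := by
    have := hγ.inner ℝ (hasDerivAt_const (0:ℝ) τ)
    simpa [hγ0, hττ, hτ] using this
  have hppc : HasDerivAt (fun s => -(pp (γ s)) * ⟪γ s, τ⟫) (-(pp x)) 0 := by
    have hpd : HasDerivAt (fun s => -(pp (γ s))) (-(fderiv ℝ pp x τ)) 0 :=
      (hasDerivAt_comp_gc x τ hppd).neg
    have := hpd.mul hpτ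
    simpa [hγ0, hτt, Pi.mul_def] using this
  have hpmc : HasDerivAt (fun s => -(pm (γ s)) * ⟪γ s, τ⟫) (-(pm x)) 0 := by
    have hpd : HasDerivAt (fun s => -(pm (γ s))) (-(fderiv ℝ pm x τ)) 0 :=
      (hasDerivAt_comp_gc x τ hpmd).neg
    have := hpd.mul hpτ
    simpa [hγ0, hτt, Pi.mul_def] using this
  -- full RHS derivative
  have hR : HasDerivAt
      (fun s => (-(pp (γ s)) * ⟪γ s, τ⟫
          + μp * (⟪fderiv ℝ up (γ s) (γ s), τ⟫ + ⟪γ s, fderiv ℝ up (γ s) τ⟫))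
        - (-(pm (γ s)) * ⟪γ s, τ⟫
          + μm * (⟪fderiv ℝ um (γ s) (γ s), τ⟫ + ⟪γ s, fderiv ℝ um (γ s) τ⟫)))
      ((-(pp x) + μp * (⟪fderiv ℝ (fderiv ℝ up) x τ x, τ⟫ + ⟪fderiv ℝ up x τ, τ⟫
          + ⟪τ, fderiv ℝ up x τ⟫ + ⟪x, fderiv ℝ (fderiv ℝ up) x τ τ⟫))
        - (-(pm x) + μm * (⟪fderiv ℝ (fderiv ℝ um) x τ x, τ⟫ + ⟪fderiv ℝ um x τ, τ⟫
          + ⟪τ, fderiv ℝ um x τ⟫ + ⟪x, fderiv ℝ (fderiv ℝ um) x τ τ⟫))) 0 :=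
    (hppc.add ((piece up hup2).const_mul μp)).sub (hpmc.add ((piece um hum2).const_mul μm))
  -- the two functions agree
  have hfun : (fun s => ⟪f (γ s), τ⟫)
      = (fun s => (-(pp (γ s)) * ⟪γ s, τ⟫
          + μp * (⟪fderiv ℝ up (γ s) (γ s), τ⟫ + ⟪γ s, fderiv ℝ up (γ s) τ⟫))
        - (-(pm (γ s)) * ⟪γ s, τ⟫
          + μm * (⟪fderiv ℝ um (γ s) (γ s), τ⟫ + ⟪γ s, fderiv ℝ um (γ s) τ⟫))) :=
    funext fun s => stress_inner hstress (γ s) (gc_mem hx hτ hτx s) τ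
  rw [hfun] at hL
  have := hL.unique hR
  rw [this]; ring

set_option maxHeartbeats 1600000 in
/-- Theorem 3.5, second form, on the unit sphere (normal `n(x) = x`, curvature `H = 2`,
principal curvatures `κ_t = κ_b = 1`):
`[∂p/∂n] = 2[μ](n·∇ₛ²q + κ_t ∂q/∂t·t + κ_b ∂q/∂b·b) − ∇ₛ·f + (f·n)H + [g]·n`. -/
theorem jump_dpdn_second_form_sphere
    (μp μm : ℝ) (hμp : 0 < μp) (hμm : 0 < μm)
    (Up Um : Set E3) (hUp : IsOpen Up) (hUm : IsOpen Um)
    (hSUp : unitSphere ⊆ Up) (hSUm : unitSphere ⊆ Um)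
    (up um : E3 → E3) (pp pm : E3 → ℝ) (gp gm : E3 → E3) (f : E3 → E3)
    (hup : ContDiffOn ℝ 2 up Up) (hum : ContDiffOn ℝ 2 um Um)
    (hpp : ContDiffOn ℝ 1 pp Up) (hpm : ContDiffOn ℝ 1 pm Um)
    (hgp : Continuous gp) (hgm : Continuous gm)
    (Vf : Set E3) (hVf : IsOpen Vf) (hSVf : unitSphere ⊆ Vf)
    (hf : ContDiffOn ℝ 1 f Vf)
    (hstokesp : ∀ x ∈ Up, gradient pp x = μp • vecLap up x + gp x)
    (hstokesm : ∀ x ∈ Um, gradient pm x = μm • vecLap um x + gm x)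
    (hdivp : ∀ x ∈ Up, LinearMap.trace ℝ E3 (fderiv ℝ up x : E3 →ₗ[ℝ] E3) = 0)
    (hdivm : ∀ x ∈ Um, LinearMap.trace ℝ E3 (fderiv ℝ um x : E3 →ₗ[ℝ] E3) = 0)
    (hcont : ∀ x ∈ unitSphere, up x = um x)
    (hsurfinc : ∀ x ∈ unitSphere, ⟪fderiv ℝ um x x, x⟫ = 0)
    (hstress : ∀ x ∈ unitSphere,
      ((-(pp x)) • x + μp • ((fderiv ℝ up x + ContinuousLinearMap.adjoint (fderiv ℝ up x)) x))
        - ((-(pm x)) • x + μm • ((fderiv ℝ um x + ContinuousLinearMap.adjoint (fderiv ℝ um x)) x))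
        = f x) :
    ∀ x ∈ unitSphere, ∀ t b : E3,
      ‖t‖ = 1 → ‖b‖ = 1 → ⟪t, b⟫ = 0 → ⟪t, x⟫ = 0 → ⟪b, x⟫ = 0 →
      ⟪gradient pp x - gradient pm x, x⟫
        = 2 * (μp - μm) *
            (⟪D2 um x t t + D2 um x b b - (2 : ℝ) • fderiv ℝ um x x, x⟫
              + ⟪fderiv ℝ um x t, t⟫ + ⟪fderiv ℝ um x b, b⟫)
          - (⟪fderiv ℝ f x t, t⟫ + ⟪fderiv ℝ f x b, b⟫)
          + 2 * ⟪f x, x⟫ + ⟪gp x - gm x, x⟫ := by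
  intro x hx t b ht hb htb htx hbx
  have hxn : ‖x‖ = 1 := hx
  have hxUp : x ∈ Up := hSUp hx
  have hxUm : x ∈ Um := hSUm hx
  have hON : Orthonormal ℝ ![t, b, x] := frame_orthonormal hxn ht hb htb htx hbx
  -- differentiability facts
  have hppd : DifferentiableAt ℝ pp x :=
    (hpp.differentiableOn one_ne_zero).differentiableAt (hUp.mem_nhds hxUp)
  have hpmd : DifferentiableAt ℝ pm x :=
    (hpm.differentiableOn one_ne_zero).differentiableAt (hUm.mem_nhds hxUm)
  have hfd : DifferentiableAt ℝ f x :=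
    (hf.differentiableOn one_ne_zero).differentiableAt (hVf.mem_nhds (hSVf hx))
  have hupc : ContDiffAt ℝ 2 up x := hup.contDiffAt (hUp.mem_nhds hxUp)
  have humc : ContDiffAt ℝ 2 um x := hum.contDiffAt (hUm.mem_nhds hxUm)
  have hup2 : DifferentiableAt ℝ (fderiv ℝ up) x :=
    (hupc.fderiv_right (m := 1) (by norm_num)).differentiableAt one_ne_zero
  have hum2 : DifferentiableAt ℝ (fderiv ℝ um) x :=
    (humc.fderiv_right (m := 1) (by norm_num)).differentiableAt one_ne_zero
  have hupdS : ∀ y ∈ unitSphere, DifferentiableAt ℝ up y := fun y hy =>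
    (hup.differentiableOn (by norm_num)).differentiableAt (hUp.mem_nhds (hSUp hy))
  have humdS : ∀ y ∈ unitSphere, DifferentiableAt ℝ um y := fun y hy =>
    (hum.differentiableOn (by norm_num)).differentiableAt (hUm.mem_nhds (hSUm hy))
  have hsymp : IsSymmSndFDerivAt ℝ up x := hupc.isSymmSndFDerivAt (by simp)
  -- abbreviations
  set Ap := fderiv ℝ (fderiv ℝ up) x with hAp
  set Am := fderiv ℝ (fderiv ℝ um) x with hAm
  set Dp := fderiv ℝ up x with hDp
  set Dm := fderiv ℝ um x with hDm
  have hxx : ⟪x, x⟫ = (1:ℝ) := by rw [real_inner_self_eq_norm_mul_norm, hxn]; norm_num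
  -- tangential first-derivative equality
  have F2t : Dp t = Dm t := fderiv_tang_eq hxn ht htx hcont (hupdS x hx) (humdS x hx)
  have F2b : Dp b = Dm b := fderiv_tang_eq hxn hb hbx hcont (hupdS x hx) (humdS x hx)
  -- trace identities at x
  have F1p : ⟪Dm t, t⟫ + ⟪Dm b, b⟫ + ⟪Dp x, x⟫ = 0 := by
    have h0 := hdivp x hxUp
    rw [trace_frame hON] at h0
    simp only [ContinuousLinearMap.coe_coe] at h0
    rw [← hDp, F2t, F2b] at h0
    have c1 : (⟪t, Dm t⟫:ℝ) = ⟪Dm t, t⟫ := real_inner_comm _ _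
    have c2 : (⟪b, Dm b⟫:ℝ) = ⟪Dm b, b⟫ := real_inner_comm _ _
    have c3 : (⟪x, Dp x⟫:ℝ) = ⟪Dp x, x⟫ := real_inner_comm _ _
    linarith [h0]
  have F1m : ⟪Dm t, t⟫ + ⟪Dm b, b⟫ + ⟪Dm x, x⟫ = 0 := by
    have h0 := hdivm x hxUm
    rw [trace_frame hON] at h0
    simp only [ContinuousLinearMap.coe_coe] at h0
    rw [← hDm] at h0
    have c1 : (⟪t, Dm t⟫:ℝ) = ⟪Dm t, t⟫ := real_inner_comm _ _
    have c2 : (⟪b, Dm b⟫:ℝ) = ⟪Dm b, b⟫ := real_inner_comm _ _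
    have c3 : (⟪x, Dm x⟫:ℝ) = ⟪Dm x, x⟫ := real_inner_comm _ _
    linarith [h0]
  have hemx : ⟪Dm x, x⟫ = 0 := hsurfinc x hx
  have hdpx : ⟪Dp x, x⟫ = 0 := by linarith [F1p, F1m, hemx]
  -- normal component of the stress jump
  have h5 : ⟪f x, x⟫ = -(pp x) + pm x := by
    have h0 := stress_inner hstress x hx x
    rw [← hDp, ← hDm, hxx] at h0
    rw [show (⟪x, Dp x⟫:ℝ) = ⟪Dp x, x⟫ from real_inner_comm _ _,
      show (⟪x, Dm x⟫:ℝ) = ⟪Dm x, x⟫ from real_inner_comm _ _] at h0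
    rw [h0, hdpx, hemx]; ring
  -- normal derivative of divergence
  have h6p : ⟪Ap t x, t⟫ + ⟪Ap b x, b⟫ + ⟪x, Ap x x⟫ = 0 := by
    have h0 := divderiv_frame hON hUp hxUp hup2 hdivp
    rw [← hAp, hsymp x t, hsymp x b] at h0
    have c1 : (⟪t, Ap t x⟫:ℝ) = ⟪Ap t x, t⟫ := real_inner_comm _ _
    have c2 : (⟪b, Ap b x⟫:ℝ) = ⟪Ap b x, b⟫ := real_inner_comm _ _
    linarith [h0]
  have hsymm : IsSymmSndFDerivAt ℝ um x := humc.isSymmSndFDerivAt (by simp)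
  have h6m : ⟪Am t x, t⟫ + ⟪Am b x, b⟫ + ⟪x, Am x x⟫ = 0 := by
    have h0 := divderiv_frame hON hUm hxUm hum2 hdivm
    rw [← hAm, hsymm x t, hsymm x b] at h0
    have c1 : (⟪t, Am t x⟫:ℝ) = ⟪Am t x, t⟫ := real_inner_comm _ _
    have c2 : (⟪b, Am b x⟫:ℝ) = ⟪Am b x, b⟫ := real_inner_comm _ _
    linarith [h0]
  -- jump of tangential second derivatives
  have h8t : ⟪x, Ap t t⟫ = ⟪x, Am t t⟫ := by
    have h0 := secondDeriv_jump hxn ht htx hcont hupdS humdS hup2 hum2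
    rw [← hAp, ← hAm, ← hDp, ← hDm] at h0
    have h1 := congrArg (fun v : E3 => ⟪x, v⟫) h0
    simp only [inner_sub_right] at h1
    rw [show (⟪x, Dp x⟫:ℝ) = ⟪Dp x, x⟫ from real_inner_comm _ _,
      show (⟪x, Dm x⟫:ℝ) = ⟪Dm x, x⟫ from real_inner_comm _ _, hdpx, hemx] at h1
    linarith [h1]
  have h8b : ⟪x, Ap b b⟫ = ⟪x, Am b b⟫ := by
    have h0 := secondDeriv_jump hxn hb hbx hcont hupdS humdS hup2 hum2
    rw [← hAp, ← hAm, ← hDp, ← hDm] at h0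
    have h1 := congrArg (fun v : E3 => ⟪x, v⟫) h0
    simp only [inner_sub_right] at h1
    rw [show (⟪x, Dp x⟫:ℝ) = ⟪Dp x, x⟫ from real_inner_comm _ _,
      show (⟪x, Dm x⟫:ℝ) = ⟪Dm x, x⟫ from real_inner_comm _ _, hdpx, hemx] at h1
    linarith [h1]
  -- tangential derivatives of the stress jump
  have h9t : ⟪fderiv ℝ f x t, t⟫ = -(pp x) + pm x
      + μp * (⟪Ap t x, t⟫ + 2 * ⟪Dm t, t⟫ + ⟪x, Ap t t⟫)
      - μm * (⟪Am t x, t⟫ + 2 * ⟪Dm t, t⟫ + ⟪x, Am t t⟫) := by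
    have h0 := stress_tang hstress hxn ht htx hppd hpmd hfd hup2 hum2
    rw [← hAp, ← hAm, ← hDp, ← hDm, F2t] at h0
    rw [show (⟪t, Dm t⟫:ℝ) = ⟪Dm t, t⟫ from real_inner_comm _ _] at h0
    rw [h0]; ring
  have h9b : ⟪fderiv ℝ f x b, b⟫ = -(pp x) + pm x
      + μp * (⟪Ap b x, b⟫ + 2 * ⟪Dm b, b⟫ + ⟪x, Ap b b⟫)
      - μm * (⟪Am b x, b⟫ + 2 * ⟪Dm b, b⟫ + ⟪x, Am b b⟫) := by
    have h0 := stress_tang hstress hxn hb hbx hppd hpmd hfd hup2 hum2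
    rw [← hAp, ← hAm, ← hDp, ← hDm, F2b] at h0
    rw [show (⟪b, Dm b⟫:ℝ) = ⟪Dm b, b⟫ from real_inner_comm _ _] at h0
    rw [h0]; ring
  -- Laplacian inner products
  have hLp : ⟪vecLap up x, x⟫ = ⟪x, Ap t t⟫ + ⟪x, Ap b b⟫ + ⟪x, Ap x x⟫ := by
    have := vecLap_inner_frame hON up
    rw [← hAp] at this; exact this
  have hLm : ⟪vecLap um x, x⟫ = ⟪x, Am t t⟫ + ⟪x, Am b b⟫ + ⟪x, Am x x⟫ := by
    have := vecLap_inner_frame hON um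
    rw [← hAm] at this; exact this
  -- assemble
  rw [hstokesp x hxUp, hstokesm x hxUm]
  simp only [D2, ← hAp, ← hAm, ← hDp, ← hDm]
  simp only [inner_sub_left, inner_add_left, real_inner_smul_left]
  rw [hLp, hLm]
  rw [show (⟪Am t t, x⟫:ℝ) = ⟪x, Am t t⟫ from real_inner_comm _ _,
    show (⟪Am b b, x⟫:ℝ) = ⟪x, Am b b⟫ from real_inner_comm _ _]
  linear_combination h9t + h9b - 2 * h5 + μp * h6p - μm * h6m
    + 2 * μp * (h8t + h8b) + 4 * (μp - μm) * hemx
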